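/- arXiv:1810.06170 — 3 statements merged into one kernel-verified Lean document; each statement's English description precedes it below -/
import Mathlib

section
/- Let 𝒫 ⊂ ℤ^d be a finite set that spans ℝ^d (i.e. 𝒫 is not contained in any linear hyperplane of ℝ^d), and let a_i > 0 for each i ∈ 𝒫. Define P : (0,∞)^d → ℝ by P(z) = Σ_{i∈𝒫} a_i z_1^{i_1}⋯z_d^{i_d}. Then: (a) every critical point of P on (0,∞)^d (a point where all first partial derivatives of P vanish) is a global minimum of P on (0,∞)^d; (b) P has at most one critical point on (0,∞)^d; (c) P attains a global minimum on (0,∞)^d if and only if 𝒫 is not contained in any closed halfspace {x ∈ ℝ^d : ⟨x, c⟩ ≤ 0} for a nonzero c ∈ ℝ^d. -/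
/-!
In logarithmic coordinates `z = exp x` the Laurent polynomial becomes `g x = ∑ aᵢ exp ⟪i, x⟫`, a
positive combination of exponentials of linear forms. At a critical point `x` the first-order
terms cancel, so `g (x + w) - g x = ∑ aᵢ e^⟪i, x⟫ (e^⟪i, w⟫ - 1 - ⟪i, w⟫)`, which is nonnegative
and vanishes only if `w` is orthogonal to every exponent, i.e. `w = 0` since the exponents span.
If all exponents lie in a halfspace `⟪·, c⟫ ≤ 0`, moving along `c` strictly decreases `g`, so there
is no minimum. Otherwise `maxᵢ ⟪i, x⟫ ≥ δ ‖x‖` for some `δ > 0`, so `g` is coercive and attains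
its minimum.
-/

open Finset Real Filter Matrix

theorem eq_zero_of_forall_dotProduct_eq_zero {R ι n : Type*} [Field R] [LinearOrder R]
    [IsStrictOrderedRing R] [Fintype n] {s : Set ι} {v : ι → n → R}
    (hspan : Submodule.span R (v '' s) = ⊤) {w : n → R} (h : ∀ i ∈ s, v i ⬝ᵥ w = 0) :
    w = 0 := by
  have hker : Submodule.span R (v '' s) ≤ LinearMap.ker ((dotProductBilin R R).flip w) := by
    rw [Submodule.span_le]
    rintro _ ⟨i, hi, rfl⟩
    exact h i hi
  rw [hspan, top_le_iff, LinearMap.ker_eq_top] at hker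
  exact dotProduct_self_eq_zero.mp (LinearMap.congr_fun hker w)

theorem exists_pos_mul_norm_le_of_homogeneous {E : Type*} [NormedAddCommGroup E]
    [NormedSpace ℝ E] [ProperSpace E] {F : E → ℝ} (hF : Continuous F)
    (hhom : ∀ t : ℝ, 0 ≤ t → ∀ x, F (t • x) = t * F x) (hpos : ∀ x ≠ 0, 0 < F x) :
    ∃ δ > 0, ∀ x, δ * ‖x‖ ≤ F x := by
  rcases subsingleton_or_nontrivial E with _ | _
  · refine ⟨1, one_pos, fun x => ?_⟩
    have h0 : F 0 = 0 := by simpa using hhom 0 le_rfl 0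
    simp [Subsingleton.elim x 0, h0]
  obtain ⟨u, hu, hmin⟩ := (isCompact_sphere (0 : E) 1).exists_isMinOn
    (NormedSpace.sphere_nonempty.mpr zero_le_one) hF.continuousOn
  have hu0 : u ≠ 0 := ne_zero_of_mem_unit_sphere ⟨u, hu⟩
  refine ⟨F u, hpos u hu0, fun x => ?_⟩
  rcases eq_or_ne x 0 with rfl | hx
  · simpa using (hhom 0 le_rfl 0).ge
  have hxn : 0 < ‖x‖ := norm_pos_iff.mpr hx
  have hunit : ‖x‖⁻¹ • x ∈ Metric.sphere (0 : E) 1 := by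
    simp [norm_smul, hxn.ne']
  calc F u * ‖x‖ ≤ F (‖x‖⁻¹ • x) * ‖x‖ := by gcongr; exact hmin hunit
    _ = F x := by
      rw [hhom _ (inv_nonneg.mpr hxn.le), mul_right_comm, inv_mul_cancel₀ hxn.ne', one_mul]

section ExpSum

variable {ι n : Type*} [Fintype n] (s : Finset ι) (a : ι → ℝ) (v : ι → n → ℝ)

noncomputable def expSum (x : n → ℝ) : ℝ :=
  ∑ i ∈ s, a i * exp (v i ⬝ᵥ x)

noncomputable def expSumGrad (x : n → ℝ) : n → ℝ :=
  ∑ i ∈ s, (a i * exp (v i ⬝ᵥ x)) • v i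

theorem continuous_expSum : Continuous (expSum s a v) := by
  unfold expSum
  fun_prop

theorem hasDerivAt_expSum_update [DecidableEq n] (x : n → ℝ) (m : n) :
    HasDerivAt (fun t => expSum s a v (Function.update x m t)) (expSumGrad s a v x m) (x m) := by
  have hdot (i : ι) : HasDerivAt (fun t => v i ⬝ᵥ Function.update x m t) (v i m) (x m) := by
    have := (dotProductBilin ℝ ℝ (v i)).toContinuousLinearMap.hasFDerivAt.comp_hasDerivAt (x m)
        (hasDerivAt_update x m (x m))
    simpa [Function.comp_def, dotProduct_single] using this
  simp only [expSumGrad, Finset.sum_apply, Pi.smul_apply, smul_eq_mul]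
  refine HasDerivAt.fun_sum fun i _ => ?_
  simpa [mul_assoc] using ((hdot i).exp.const_mul (a i))

variable {s a v}

theorem expSum_add_sub_expSum {x : n → ℝ} (hx : expSumGrad s a v x = 0) (w : n → ℝ) :
    expSum s a v (x + w) - expSum s a v x =
      ∑ i ∈ s, a i * exp (v i ⬝ᵥ x) * (exp (v i ⬝ᵥ w) - 1 - v i ⬝ᵥ w) := by
  have hfirst : ∑ i ∈ s, a i * exp (v i ⬝ᵥ x) * v i ⬝ᵥ w = 0 := by
    simpa [expSumGrad, sum_dotProduct, smul_dotProduct] using congrArg (· ⬝ᵥ w) hx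
  simp only [expSum, dotProduct_add, exp_add, mul_sub, mul_one, sum_sub_distrib, hfirst,
    sub_zero, ← mul_assoc]

theorem expSum_le_of_expSumGrad_eq_zero (ha : ∀ i ∈ s, 0 ≤ a i) {x : n → ℝ}
    (hx : expSumGrad s a v x = 0) (y : n → ℝ) : expSum s a v x ≤ expSum s a v y := by
  have key := expSum_add_sub_expSum hx (y - x)
  rw [add_sub_cancel] at key
  have : 0 ≤ expSum s a v y - expSum s a v x := key ▸ sum_nonneg fun i hi =>
    mul_nonneg (mul_nonneg (ha i hi) (exp_pos _).le)
      (by linarith [add_one_le_exp (v i ⬝ᵥ (y - x))])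
  linarith

theorem dotProduct_eq_zero_of_expSum_eq (ha : ∀ i ∈ s, 0 < a i) {x : n → ℝ}
    (hx : expSumGrad s a v x = 0) {w : n → ℝ} (heq : expSum s a v (x + w) = expSum s a v x) :
    ∀ i ∈ s, v i ⬝ᵥ w = 0 := by
  have hpos (i) (hi : i ∈ s) : 0 < a i * exp (v i ⬝ᵥ x) := mul_pos (ha i hi) (exp_pos _)
  have hsum := expSum_add_sub_expSum hx w
  rw [heq, sub_self, eq_comm, sum_eq_zero_iff_of_nonneg fun i hi => mul_nonneg (hpos i hi).le
    (by linarith [add_one_le_exp (v i ⬝ᵥ w)])] at hsum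
  intro i hi
  by_contra hne
  have := mul_pos (hpos i hi) (sub_pos.mpr (add_one_lt_exp hne))
  linarith [hsum i hi]

theorem eq_of_expSumGrad_eq_zero (ha : ∀ i ∈ s, 0 < a i)
    (hspan : Submodule.span ℝ (v '' s) = ⊤) {x y : n → ℝ} (hx : expSumGrad s a v x = 0)
    (hy : expSumGrad s a v y = 0) : x = y := by
  have hle := expSum_le_of_expSumGrad_eq_zero (fun i hi => (ha i hi).le) hx y
  have hge := expSum_le_of_expSumGrad_eq_zero (fun i hi => (ha i hi).le) hy x
  have hw := dotProduct_eq_zero_of_expSum_eq ha hx (w := y - x)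
    (by rw [add_sub_cancel]; exact hle.antisymm' hge)
  exact (sub_eq_zero.mp (eq_zero_of_forall_dotProduct_eq_zero hspan hw)).symm

theorem expSum_add_lt (ha : ∀ i ∈ s, 0 < a i) (x : n → ℝ) {c : n → ℝ}
    (hc : ∀ i ∈ s, v i ⬝ᵥ c ≤ 0) {j : ι} (hj : j ∈ s) (hjc : v j ⬝ᵥ c < 0) :
    expSum s a v (x + c) < expSum s a v x := by
  simp only [expSum, dotProduct_add, exp_add, ← mul_assoc]
  refine sum_lt_sum (fun i hi => ?_) ⟨j, hj, ?_⟩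
  · exact mul_le_of_le_one_right (mul_pos (ha i hi) (exp_pos _)).le (exp_le_one_iff.mpr (hc i hi))
  · exact mul_lt_of_lt_one_right (mul_pos (ha j hj) (exp_pos _)) (exp_lt_one_iff.mpr hjc)

theorem tendsto_expSum_cocompact (ha : ∀ i ∈ s, 0 < a i) (hs : s.Nonempty)
    (hv : ∀ x ≠ 0, ∃ i ∈ s, 0 < v i ⬝ᵥ x) :
    Tendsto (expSum s a v) (cocompact (n → ℝ)) atTop := by
  set F : (n → ℝ) → ℝ := fun x => s.sup' hs fun i => v i ⬝ᵥ x
  obtain ⟨δ, hδ, hδF⟩ := exists_pos_mul_norm_le_of_homogeneous (F := F)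
    (Continuous.finset_sup'_apply hs fun i _ => by fun_prop)
    (fun t ht x => by simp only [F, dotProduct_smul, smul_eq_mul, mul₀_sup' ht])
    (fun x hx => by
      obtain ⟨i, hi, hpos⟩ := hv x hx
      exact hpos.trans_le (le_sup' (fun i => v i ⬝ᵥ x) hi))
  have hamin : 0 < s.inf' hs a := (lt_inf'_iff hs).mpr ha
  have hlow (x : n → ℝ) : s.inf' hs a * exp (δ * ‖x‖) ≤ expSum s a v x := by
    obtain ⟨i, hi, hFi⟩ := exists_mem_eq_sup' hs fun i => v i ⬝ᵥ x
    calc s.inf' hs a * exp (δ * ‖x‖) ≤ a i * exp (v i ⬝ᵥ x) := by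
          gcongr
          · exact (ha i hi).le
          · exact inf'_le a hi
          · exact hFi ▸ hδF x
      _ ≤ expSum s a v x :=
          single_le_sum (f := fun i => a i * exp (v i ⬝ᵥ x))
            (fun j hj => (mul_pos (ha j hj) (exp_pos _)).le) hi
  exact tendsto_atTop_mono hlow <| (tendsto_exp_atTop.comp <|
    tendsto_norm_cocompact_atTop.const_mul_atTop hδ).const_mul_atTop hamin

theorem exists_forall_expSum_le_iff (ha : ∀ i ∈ s, 0 < a i)
    (hspan : Submodule.span ℝ (v '' s) = ⊤) :
    (∃ x, ∀ y, expSum s a v x ≤ expSum s a v y) ↔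
      ¬ ∃ c : n → ℝ, c ≠ 0 ∧ ∀ i ∈ s, v i ⬝ᵥ c ≤ 0 := by
  constructor
  · rintro ⟨x, hx⟩ ⟨c, hc0, hc⟩
    refine hc0 (eq_zero_of_forall_dotProduct_eq_zero hspan fun i hi => ?_)
    by_contra hne
    exact (expSum_add_lt ha x hc hi ((hc i hi).lt_of_ne hne)).not_ge (hx _)
  · intro hc
    rcases s.eq_empty_or_nonempty with rfl | hs
    · exact ⟨0, fun y => by simp [expSum]⟩
    push Not at hc
    exact (continuous_expSum s a v).exists_forall_le (tendsto_expSum_cocompact ha hs hc)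

end ExpSum

section Laurent

variable {n : Type*} [Fintype n] (P : Finset (n → ℤ)) (a : (n → ℤ) → ℝ)

noncomputable def laurentPoly (z : n → ℝ) : ℝ :=
  ∑ i ∈ P, a i * ∏ k, z k ^ i k

theorem prod_zpow_eq_exp_dotProduct_log (i : n → ℤ) {z : n → ℝ} (hz : ∀ k, 0 < z k) :
    ∏ k, z k ^ i k = exp ((fun k => (i k : ℝ)) ⬝ᵥ fun k => log (z k)) := by
  rw [dotProduct, exp_sum]
  refine prod_congr rfl fun k _ => ?_
  rw [← rpow_intCast, rpow_def_of_pos (hz k), mul_comm]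

theorem laurentPoly_eq_expSum {z : n → ℝ} (hz : ∀ k, 0 < z k) :
    laurentPoly P a z = expSum P a (fun i k => (i k : ℝ)) fun k => log (z k) :=
  sum_congr rfl fun i _ => by rw [prod_zpow_eq_exp_dotProduct_log i hz]

theorem laurentPoly_exp (x : n → ℝ) :
    laurentPoly P a (fun k => exp (x k)) = expSum P a (fun i k => (i k : ℝ)) x := by
  simp [laurentPoly_eq_expSum P a fun k => exp_pos (x k)]

theorem exists_forall_laurentPoly_le_iff :
    (∃ z : n → ℝ, (∀ k, 0 < z k) ∧ ∀ y : n → ℝ, (∀ k, 0 < y k) →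
      laurentPoly P a z ≤ laurentPoly P a y) ↔
    ∃ x, ∀ y, expSum P a (fun i k => (i k : ℝ)) x ≤ expSum P a (fun i k => (i k : ℝ)) y := by
  constructor
  · rintro ⟨z, hz, hmin⟩
    refine ⟨fun k => log (z k), fun x => ?_⟩
    rw [← laurentPoly_eq_expSum P a hz, ← laurentPoly_exp]
    exact hmin _ fun k => exp_pos (x k)
  · rintro ⟨x, hmin⟩
    refine ⟨fun k => exp (x k), fun k => exp_pos (x k), fun y hy => ?_⟩
    rw [laurentPoly_exp, laurentPoly_eq_expSum P a hy]
    exact hmin _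

variable {P a}

theorem expSumGrad_log_eq_zero [DecidableEq n] {z : n → ℝ} (hz : ∀ k, 0 < z k)
    (hcrit : ∀ m, deriv (fun s => laurentPoly P a (Function.update z m s)) (z m) = 0) :
    expSumGrad P a (fun i k => (i k : ℝ)) (fun k => log (z k)) = 0 := by
  set x : n → ℝ := fun k => log (z k)
  funext m
  have hcomp := (hasDerivAt_expSum_update P a (fun i k => (i k : ℝ)) x m).comp (z m)
    (hasDerivAt_log (hz m).ne')
  have hlocal : (fun s => laurentPoly P a (Function.update z m s)) =ᶠ[nhds (z m)]
      fun s => expSum P a (fun i k => (i k : ℝ)) (Function.update x m (log s)) := by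
    filter_upwards [Ioi_mem_nhds (hz m)] with s hs
    rw [laurentPoly_eq_expSum P a ((Function.forall_update_iff z fun _ t => 0 < t).mpr
      ⟨hs, fun k _ => hz k⟩)]
    congr 1
    exact Function.comp_update log z m s
  have := hcrit m
  rw [(hcomp.congr_of_eventuallyEq hlocal).deriv] at this
  simpa [(hz m).ne'] using this

end Laurent

theorem laurent_polynomial_positive_orthant_minimum
    (d : ℕ) (P : Finset (Fin d → ℤ)) (a : (Fin d → ℤ) → ℝ)
    -- positive coefficients
    (ha : ∀ i ∈ P, 0 < a i)
    -- P is not contained in a hyperplane of ℝ^d, i.e. it spans ℝ^d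
    (hspan : Submodule.span ℝ ((fun i : Fin d → ℤ => fun k => (i k : ℝ)) '' ↑P) = ⊤)
    (f : (Fin d → ℝ) → ℝ)
    (hf : ∀ z, f z = ∑ i ∈ P, a i * ∏ k : Fin d, z k ^ (i k)) :
    -- (a) every critical point on the positive orthant is a global minimum
    ((∀ z : Fin d → ℝ, (∀ k, 0 < z k) →
        (∀ m : Fin d, deriv (fun s : ℝ => f (Function.update z m s)) (z m) = 0) →
        ∀ y : Fin d → ℝ, (∀ k, 0 < y k) → f z ≤ f y) ∧
    -- (b) at most one critical point on the positive orthant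
    (∀ z y : Fin d → ℝ, (∀ k, 0 < z k) → (∀ k, 0 < y k) →
        (∀ m : Fin d, deriv (fun s : ℝ => f (Function.update z m s)) (z m) = 0) →
        (∀ m : Fin d, deriv (fun s : ℝ => f (Function.update y m s)) (y m) = 0) →
        z = y) ∧
    -- (c) a global minimum exists iff P is not contained in a halfspace containing 0
    ((∃ z : Fin d → ℝ, (∀ k, 0 < z k) ∧ ∀ y : Fin d → ℝ, (∀ k, 0 < y k) → f z ≤ f y)
      ↔ ¬ ∃ c : Fin d → ℝ, c ≠ 0 ∧ ∀ i ∈ P, (∑ k : Fin d, (i k : ℝ) * c k) ≤ 0)) := by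
  obtain rfl : f = laurentPoly P a := funext hf
  refine ⟨fun z hz hcrit y hy => ?_, fun z y hz hy hzcrit hycrit => ?_,
    (exists_forall_laurentPoly_le_iff P a).trans (exists_forall_expSum_le_iff ha hspan)⟩
  · rw [laurentPoly_eq_expSum P a hz, laurentPoly_eq_expSum P a hy]
    exact expSum_le_of_expSumGrad_eq_zero (fun i hi => (ha i hi).le)
      (expSumGrad_log_eq_zero hz hcrit) _
  · have hlog := eq_of_expSumGrad_eq_zero ha hspan (expSumGrad_log_eq_zero hz hzcrit)
      (expSumGrad_log_eq_zero hy hycrit)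
    exact funext fun k => log_injOn_pos (hz k) (hy k) (congrFun hlog k)
end

section
/- Let d ≥ 2 and let 𝒮 be a weighted step set satisfying the standing assumptions. Let A, Q, B be the Laurent polynomials in z_1,…,z_{d−1} given by A = Σ_{i∈𝒮, i_d=−1} w_i z_1^{i_1}⋯z_{d−1}^{i_{d−1}}, Q and B analogously over i_d = 0 and i_d = 1, and set S̄(z) = z_d A + Q + z_d^{−1} B. For 1 ≤ j ≤ d−1 let B_j be the unique Laurent polynomial in the variables other than z_j with S̄(z) = (z_j + z_j^{−1})·B_j + Q_j, where Q_j does not involve z_j (this exists by symmetry over axis j); set B_d := B. Also define A'_j, A''_j, B'_j, B''_j (Laurent polynomials not involving z_j or z_d) by A = (z_j + z_j^{−1})A'_j + A''_j and B = (z_j + z_j^{−1})B'_j + B''_j. Let p ∈ ℂ^d satisfy p_j ∈ {1,−1} for 1 ≤ j ≤ d−1, A(p_1,…,p_{d−1}) ≠ 0, p_d ≠ 0 and p_d² = B(p_1,…,p_{d−1})/A(p_1,…,p_{d−1}). Define S̃ : ℝ^d → ℂ by S̃(θ) = p_d e^{iθ_d}·A(p_1e^{iθ_1},…,p_{d−1}e^{iθ_{d−1}})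 + Q(p_1e^{iθ_1},…,p_{d−1}e^{iθ_{d−1}}) + p_d^{−1} e^{−iθ_d}·B(p_1e^{iθ_1},…,p_{d−1}e^{iθ_{d−1}}). Then for all 1 ≤ j ≤ k ≤ d: ∂_j S̃(0) = 0; ∂_j∂_k S̃(0) = 0 if j ≠ k; ∂_d² S̃(0) = −2 B(p_1,…,p_{d−1})/p_d; ∂_j² S̃(0) = −2 p_j B_j(p restricted to coordinates ≠ j) for j < d; and for j < d, ∂_d ∂_j² S̃(0) = −2 i p_j ( p_d · A'_j(p restricted to coordinates ≠ j, d) − p_d^{−1} · B'_j(p restricted to coordinates ≠ j, d) ). -/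
open Finset

/-- The `k`-th partial derivative of a function `f : ℝ^d → ℂ`. -/
noncomputable def pderiv' (d : ℕ) (k : Fin d) (f : (Fin d → ℝ) → ℂ) :
    (Fin d → ℝ) → ℂ :=
  fun z => deriv (fun s : ℝ => f (Function.update z k s)) (z k)

/-!
Write `z = torusPoint p θ`, i.e. `z k = p k * exp (i θ k)`, so that `S̃ θ = S̄ z`. If along the
`k`-th coordinate `S̄` is `c X + Y + c⁻¹ Z` in `c = z k`, then `∂_k` acts as the Euler operator
`i z_k ∂/∂z_k` and gives `i (z_k X - z_k⁻¹ Z)`; applied twice it gives `-(z_k X + z_k⁻¹ Z)`.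
At `θ = 0` the first derivative vanishes as soon as the slice is balanced, `p_k X = p_k⁻¹ Z`:
for `k < d` because `p_k = ±1` and `X = Z = B_k`, for `k = d` because `p_d² = B / A`. The mixed
derivatives are first derivatives along such balanced slices, and the third-order one comes from
expanding the coefficient `B_j` of `z_j + z_j⁻¹` as `z_d A'_j + (terms free of z_d) + z_d⁻¹ B'_j`.
-/

section

open Complex Function

theorem mul_eq_inv_mul_of_sq_eq_div {K : Type*} [Field K] {x a b : K} (hx : x ≠ 0)
    (h : x ^ 2 = b / a) : x * a = x⁻¹ * b := by
  have ha : a ≠ 0 := by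
    rintro rfl
    exact hx (pow_eq_zero_iff two_ne_zero |>.mp (by simpa using h))
  field_simp
  rw [h, div_mul_cancel₀ _ ha]

theorem hasDerivAt_mul_exp_add_add_mul_exp_neg (a b c : ℂ) (s : ℝ) :
    HasDerivAt (fun t : ℝ => a * exp (I * t) + b + c * exp (-(I * t)))
      (I * (a * exp (I * s) - c * exp (-(I * s)))) s := by
  have h : HasDerivAt (fun t : ℝ => I * t) I s := by
    simpa using (ofRealCLM.hasDerivAt (x := s)).const_mul I
  refine (((h.cexp.const_mul a).add_const b).fun_add (h.fun_neg.cexp.const_mul c)).congr_deriv ?_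
  ring

variable {ι : Type*}

noncomputable def torusPoint (p : ι → ℂ) (θ : ι → ℝ) : ι → ℂ :=
  fun k => p k * exp (I * θ k)

@[simp]
theorem torusPoint_zero (p : ι → ℂ) : torusPoint p 0 = p := by
  funext k
  simp [torusPoint]

theorem torusPoint_ne_zero {p : ι → ℂ} (hp : ∀ k, p k ≠ 0) (θ : ι → ℝ) (k : ι) :
    torusPoint p θ k ≠ 0 :=
  mul_ne_zero (hp k) (exp_ne_zero _)

variable [DecidableEq ι]

theorem torusPoint_update (p : ι → ℂ) (θ : ι → ℝ) (k : ι) (s : ℝ) :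
    torusPoint p (update θ k s) = update (torusPoint p θ) k (p k * exp (I * s)) := by
  funext i
  rcases eq_or_ne i k with rfl | h
  · simp [torusPoint]
  · simp [torusPoint, update_of_ne h]

theorem update_ne_zero {z : ι → ℂ} (hz : ∀ i, z i ≠ 0) {k : ι} {c : ℂ} (hc : c ≠ 0) (i : ι) :
    update z k c i ≠ 0 :=
  (forall_update_iff z (p := fun _ v => v ≠ 0)).2 ⟨hc, fun i _ => hz i⟩ i

theorem sum_mul_prod_zpow_update_of_notMem {F : (ι → ℂ) → ℂ} {T : Finset (ι → ℤ)}
    {s : Finset ι} {w : (ι → ℤ) → ℂ} (hF : ∀ z, F z = ∑ i ∈ T, w i * ∏ k ∈ s, z k ^ i k)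
    {l : ι} (hl : l ∉ s) (z : ι → ℂ) (c : ℂ) : F (update z l c) = F z := by
  simp only [hF]
  refine sum_congr rfl fun i _ => congrArg _ (prod_congr rfl fun k hk => ?_)
  rw [update_of_ne (ne_of_mem_of_not_mem hk hl)]

def HasLaurentSlice (k : ι) (F X Y Z : (ι → ℂ) → ℂ) : Prop :=
  ∀ z, (∀ i, z i ≠ 0) → ∀ c ≠ 0, F (update z k c) = c * X z + Y z + c⁻¹ * Z z

theorem hasLaurentSlice_of_eq_add_inv_mul_add {k : ι} {F X Y : (ι → ℂ) → ℂ}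
    (hX : ∀ z c, X (update z k c) = X z) (hY : ∀ z c, Y (update z k c) = Y z)
    (hF : ∀ z, (∀ i, z i ≠ 0) → F z = (z k + (z k)⁻¹) * X z + Y z) :
    HasLaurentSlice k F X Y X := by
  intro z hz c hc
  rw [hF _ (update_ne_zero hz hc), hX, hY, update_self]
  ring

theorem HasLaurentSlice.coeff_eq {k : ι} {F X Y : (ι → ℂ) → ℂ} (hF : HasLaurentSlice k F X Y X)
    {z : ι → ℂ} (hz : ∀ i, z i ≠ 0) : X z = 2 * (F (update z k 2) - F (update z k 1)) := by
  rw [hF z hz 2 two_ne_zero, hF z hz 1 one_ne_zero]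
  ring

theorem HasLaurentSlice.coeff_eq_mul_add_add_inv_mul {j l : ι} (hjl : j ≠ l)
    {S A Q B X Y A' A'' B' B'' : (ι → ℂ) → ℂ}
    (hS : ∀ z, S z = z l * A z + Q z + (z l)⁻¹ * B z) (hSj : HasLaurentSlice j S X Y X)
    (hA : HasLaurentSlice j A A' A'' A') (hB : HasLaurentSlice j B B' B'' B')
    {z : ι → ℂ} (hz : ∀ i, z i ≠ 0) :
    X z = z l * A' z + 2 * (Q (update z j 2) - Q (update z j 1)) + (z l)⁻¹ * B' z := by
  rw [hSj.coeff_eq hz, hA.coeff_eq hz, hB.coeff_eq hz, hS, hS, update_of_ne hjl.symm,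
    update_of_ne hjl.symm]
  ring

end

section

open Complex Function

variable {d : ℕ} {p : Fin d → ℂ}

theorem pderiv'_comp_torusPoint_apply {k : Fin d} (hpk : p k ≠ 0) {F : (Fin d → ℂ) → ℂ}
    {θ : Fin d → ℝ} {X Y Z : ℂ}
    (hF : ∀ c ≠ 0, F (update (torusPoint p θ) k c) = c * X + Y + c⁻¹ * Z) :
    pderiv' d k (fun θ => F (torusPoint p θ)) θ =
      I * (torusPoint p θ k * X - (torusPoint p θ k)⁻¹ * Z) := by
  have hslice : (fun s : ℝ => F (torusPoint p (update θ k s))) =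
      fun s : ℝ => p k * X * exp (I * s) + Y + (p k)⁻¹ * Z * exp (-(I * s)) := by
    funext s
    rw [torusPoint_update, hF _ (mul_ne_zero hpk (exp_ne_zero _)), mul_inv, ← exp_neg]
    ring
  unfold pderiv'
  rw [hslice, (hasDerivAt_mul_exp_add_add_mul_exp_neg _ Y _ (θ k)).deriv]
  simp only [torusPoint, mul_inv, ← exp_neg]
  ring

theorem pderiv'_comp_torusPoint (hp : ∀ k, p k ≠ 0) {k : Fin d} {F X Y Z : (Fin d → ℂ) → ℂ}
    (hF : HasLaurentSlice k F X Y Z) :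
    pderiv' d k (fun θ => F (torusPoint p θ)) = fun θ =>
      I * (torusPoint p θ k * X (torusPoint p θ) - (torusPoint p θ k)⁻¹ * Z (torusPoint p θ)) :=
  funext fun θ => pderiv'_comp_torusPoint_apply (hp k) (hF _ (torusPoint_ne_zero hp θ))

theorem pderiv'_pderiv'_comp_torusPoint (hp : ∀ k, p k ≠ 0) {k : Fin d}
    {F X Y Z : (Fin d → ℂ) → ℂ} (hF : HasLaurentSlice k F X Y Z)
    (hX : ∀ z c, X (update z k c) = X z) (hZ : ∀ z c, Z (update z k c) = Z z) :
    pderiv' d k (pderiv' d k (fun θ => F (torusPoint p θ))) = fun θ =>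
      -(torusPoint p θ k * X (torusPoint p θ) + (torusPoint p θ k)⁻¹ * Z (torusPoint p θ)) := by
  have hDF : HasLaurentSlice k (fun z => I * (z k * X z - (z k)⁻¹ * Z z))
      (fun z => I * X z) 0 (fun z => -(I * Z z)) := by
    intro z _ c _
    simp only [update_self, hX, hZ, Pi.zero_apply]
    ring
  rw [pderiv'_comp_torusPoint hp hF, pderiv'_comp_torusPoint hp hDF]
  funext θ
  linear_combination (torusPoint p θ k * X (torusPoint p θ) +
    (torusPoint p θ k)⁻¹ * Z (torusPoint p θ)) * I_mul_I

theorem pderiv'_comp_torusPoint_zero_eq_zero {j : Fin d} (hpj : p j ≠ 0)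
    {G : (Fin d → ℂ) → ℂ} {α β γ : ℂ}
    (hG : ∀ c ≠ 0, G (update p j c) = c * α + β + c⁻¹ * γ) (hbal : p j * α = (p j)⁻¹ * γ) :
    pderiv' d j (fun θ => G (torusPoint p θ)) 0 = 0 := by
  rw [pderiv'_comp_torusPoint_apply hpj (by simpa using hG), torusPoint_zero, hbal, sub_self,
    mul_zero]

theorem pderiv'_pderiv'_comp_torusPoint_zero_eq_zero_of_inv_eq_self (hp : ∀ k, p k ≠ 0)
    {j k : Fin d} (hjk : j ≠ k) (hpk : (p k)⁻¹ = p k) {F X Y : (Fin d → ℂ) → ℂ}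
    (hF : HasLaurentSlice k F X Y X) :
    pderiv' d j (pderiv' d k (fun θ => F (torusPoint p θ))) 0 = 0 := by
  rw [pderiv'_comp_torusPoint hp hF]
  refine pderiv'_comp_torusPoint_zero_eq_zero (hp j)
    (G := fun z => I * (z k * X z - (z k)⁻¹ * X z)) (α := 0) (β := 0) (γ := 0)
    (fun c _ => ?_) (by simp)
  simp [update_of_ne hjk.symm, hpk]

theorem pderiv'_pderiv'_comp_torusPoint_zero_eq_zero_of_hasLaurentSlice (hp : ∀ k, p k ≠ 0)
    {j l : Fin d} (hjl : j ≠ l) (hpj : (p j)⁻¹ = p j) {F A Q B A' A'' B' B'' : (Fin d → ℂ) → ℂ}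
    (hF : HasLaurentSlice l F A Q B) (hA : HasLaurentSlice j A A' A'' A')
    (hB : HasLaurentSlice j B B' B'' B') :
    pderiv' d j (pderiv' d l (fun θ => F (torusPoint p θ))) 0 = 0 := by
  rw [pderiv'_comp_torusPoint hp hF]
  refine pderiv'_comp_torusPoint_zero_eq_zero (hp j)
    (G := fun z => I * (z l * A z - (z l)⁻¹ * B z))
    (α := I * (p l * A' p - (p l)⁻¹ * B' p)) (β := I * (p l * A'' p - (p l)⁻¹ * B'' p))
    (γ := I * (p l * A' p - (p l)⁻¹ * B' p)) (fun c hc => ?_) (by rw [hpj])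
  simp only [update_of_ne hjl.symm, hA p hp c hc, hB p hp c hc]
  ring

theorem pderiv'_pderiv'_pderiv'_comp_torusPoint_zero (hp : ∀ k, p k ≠ 0) {j l : Fin d}
    (hjl : j ≠ l) (hpj : (p j)⁻¹ = p j) {S A Q B X Y A' A'' B' B'' : (Fin d → ℂ) → ℂ}
    (hS : ∀ z, S z = z l * A z + Q z + (z l)⁻¹ * B z) (hSj : HasLaurentSlice j S X Y X)
    (hX : ∀ z c, X (update z j c) = X z)
    (hA : HasLaurentSlice j A A' A'' A') (hB : HasLaurentSlice j B B' B'' B')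
    (hA' : ∀ z c, A' (update z l c) = A' z) (hB' : ∀ z c, B' (update z l c) = B' z)
    (hQ : ∀ z c, Q (update z l c) = Q z) :
    pderiv' d l (pderiv' d j (pderiv' d j (fun θ => S (torusPoint p θ)))) 0 =
      -2 * I * p j * (p l * A' p - (p l)⁻¹ * B' p) := by
  rw [pderiv'_pderiv'_comp_torusPoint hp hSj hX hX]
  refine (pderiv'_comp_torusPoint_apply (hp l) (F := fun z => -(z j * X z + (z j)⁻¹ * X z))
    (X := -2 * p j * A' p) (Y := -4 * p j * (Q (update p j 2) - Q (update p j 1)))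
    (Z := -2 * p j * B' p) fun c hc => ?_).trans ?_
  · rw [torusPoint_zero, update_of_ne hjl,
      hSj.coeff_eq_mul_add_add_inv_mul hjl hS hA hB (update_ne_zero hp hc),
      update_comm hjl.symm, update_comm hjl.symm, update_self, hA', hB', hQ, hQ, hpj]
    ring
  · simp only [torusPoint_zero]
    ring

end

theorem derivatives_of_S_tilde
    (d : ℕ) (hd : 2 ≤ d)
    (S : Finset (Fin d → ℤ)) (w : (Fin d → ℤ) → ℝ)
    -- the Laurent polynomial functions A, Q, B in z_1, …, z_{d-1}
    (AC QC BC : (Fin d → ℂ) → ℂ)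
    (hAC : ∀ z, AC z = ∑ i ∈ S.filter (fun i => i ⟨d - 1, by omega⟩ = -1),
      (w i : ℂ) * ∏ k ∈ Finset.univ.filter (fun k : Fin d => (k : ℕ) < d - 1), z k ^ (i k))
    (hQC : ∀ z, QC z = ∑ i ∈ S.filter (fun i => i ⟨d - 1, by omega⟩ = 0),
      (w i : ℂ) * ∏ k ∈ Finset.univ.filter (fun k : Fin d => (k : ℕ) < d - 1), z k ^ (i k))
    (hBC : ∀ z, BC z = ∑ i ∈ S.filter (fun i => i ⟨d - 1, by omega⟩ = 1),
      (w i : ℂ) * ∏ k ∈ Finset.univ.filter (fun k : Fin d => (k : ℕ) < d - 1), z k ^ (i k))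
    -- S̄(z) = z_d A + Q + z_d⁻¹ B
    (Sbar : (Fin d → ℂ) → ℂ)
    (hSbar : ∀ z, Sbar z =
      z ⟨d - 1, by omega⟩ * AC z + QC z + (z ⟨d - 1, by omega⟩)⁻¹ * BC z)
    -- the Laurent polynomials B_j with S̄ = (z_j + z_j⁻¹) B_j + Q_j, B_j, Q_j
    -- not involving z_j
    (Bj Qj : Fin d → ((Fin d → ℂ) → ℂ))
    (hBjind : ∀ j : Fin d, (j : ℕ) < d - 1 → ∀ z c,
      Bj j (Function.update z j c) = Bj j z)
    (hQjind : ∀ j : Fin d, (j : ℕ) < d - 1 → ∀ z c,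
      Qj j (Function.update z j c) = Qj j z)
    (hBjQj : ∀ j : Fin d, (j : ℕ) < d - 1 → ∀ z : Fin d → ℂ, (∀ k, z k ≠ 0) →
      Sbar z = (z j + (z j)⁻¹) * Bj j z + Qj j z)
    -- the Laurent polynomials A'_j, A''_j, B'_j, B''_j, not involving z_j or z_d
    (A' A'' B' B'' : Fin d → ((Fin d → ℂ) → ℂ))
    (hA'ind : ∀ j : Fin d, (j : ℕ) < d - 1 → ∀ z c,
      A' j (Function.update z j c) = A' j z ∧
      A' j (Function.update z ⟨d - 1, by omega⟩ c) = A' j z)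
    (hA''ind : ∀ j : Fin d, (j : ℕ) < d - 1 → ∀ z c,
      A'' j (Function.update z j c) = A'' j z ∧
      A'' j (Function.update z ⟨d - 1, by omega⟩ c) = A'' j z)
    (hB'ind : ∀ j : Fin d, (j : ℕ) < d - 1 → ∀ z c,
      B' j (Function.update z j c) = B' j z ∧
      B' j (Function.update z ⟨d - 1, by omega⟩ c) = B' j z)
    (hB''ind : ∀ j : Fin d, (j : ℕ) < d - 1 → ∀ z c,
      B'' j (Function.update z j c) = B'' j z ∧
      B'' j (Function.update z ⟨d - 1, by omega⟩ c) = B'' j z)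
    (hAdec : ∀ j : Fin d, (j : ℕ) < d - 1 → ∀ z : Fin d → ℂ, (∀ k, z k ≠ 0) →
      AC z = (z j + (z j)⁻¹) * A' j z + A'' j z)
    (hBdec : ∀ j : Fin d, (j : ℕ) < d - 1 → ∀ z : Fin d → ℂ, (∀ k, z k ≠ 0) →
      BC z = (z j + (z j)⁻¹) * B' j z + B'' j z)
    -- the point p
    (p : Fin d → ℂ)
    (hpj : ∀ j : Fin d, (j : ℕ) < d - 1 → (p j = 1 ∨ p j = -1))
    (hpd0 : p ⟨d - 1, by omega⟩ ≠ 0)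
    (hpd : (p ⟨d - 1, by omega⟩) ^ 2 = BC p / AC p)
    -- S̃(θ) = S̄ evaluated at (p_1 e^{iθ_1}, …, p_d e^{iθ_d})
    (St : (Fin d → ℝ) → ℂ)
    (hSt : ∀ θ : Fin d → ℝ, St θ =
      p ⟨d - 1, by omega⟩ * Complex.exp (Complex.I * (θ ⟨d - 1, by omega⟩ : ℂ)) *
          AC (fun k => p k * Complex.exp (Complex.I * (θ k : ℂ)))
        + QC (fun k => p k * Complex.exp (Complex.I * (θ k : ℂ)))
        + (p ⟨d - 1, by omega⟩)⁻¹ *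
            Complex.exp (-(Complex.I * (θ ⟨d - 1, by omega⟩ : ℂ))) *
            BC (fun k => p k * Complex.exp (Complex.I * (θ k : ℂ)))) :
    -- first derivatives vanish
    (∀ j : Fin d, pderiv' d j St 0 = 0) ∧
    -- mixed second derivatives vanish
    (∀ j k : Fin d, j ≠ k → pderiv' d j (pderiv' d k St) 0 = 0) ∧
    -- pure second derivative in the last variable
    (pderiv' d ⟨d - 1, by omega⟩ (pderiv' d ⟨d - 1, by omega⟩ St) 0 =
      -2 * BC p / p ⟨d - 1, by omega⟩) ∧
    -- pure second derivatives in the other variables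
    (∀ j : Fin d, (j : ℕ) < d - 1 →
      pderiv' d j (pderiv' d j St) 0 = -2 * p j * Bj j p) ∧
    -- the third-order mixed derivatives
    (∀ j : Fin d, (j : ℕ) < d - 1 →
      pderiv' d ⟨d - 1, by omega⟩ (pderiv' d j (pderiv' d j St)) 0 =
        -2 * Complex.I * p j *
          (p ⟨d - 1, by omega⟩ * A' j p - (p ⟨d - 1, by omega⟩)⁻¹ * B' j p)) := by
  set L : Fin d := ⟨d - 1, by omega⟩ with hL
  have hlt_or_eq : ∀ k : Fin d, (k : ℕ) < d - 1 ∨ k = L := fun k => by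
    rcases Nat.lt_or_ge (k : ℕ) (d - 1) with h | h
    · exact .inl h
    · exact .inr (Fin.ext (by simp [hL]; omega))
  have hpinv : ∀ j : Fin d, (j : ℕ) < d - 1 → (p j)⁻¹ = p j := fun j hj => by
    rcases hpj j hj with h | h <;> simp [h]
  have hp : ∀ k, p k ≠ 0 := fun k => by
    rcases hlt_or_eq k with hk | rfl
    · rcases hpj k hk with h | h <;> simp [h]
    · exact hpd0
  have hLs : L ∉ univ.filter (fun k : Fin d => (k : ℕ) < d - 1) := by simp [hL]
  have hAL := sum_mul_prod_zpow_update_of_notMem hAC hLs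
  have hQL := sum_mul_prod_zpow_update_of_notMem hQC hLs
  have hBL := sum_mul_prod_zpow_update_of_notMem hBC hLs
  have hSt' : St = fun θ => Sbar (torusPoint p θ) := by
    funext θ
    rw [hSt, hSbar]
    simp only [torusPoint, mul_inv, ← Complex.exp_neg]
    rfl
  have hSL : HasLaurentSlice L Sbar AC QC BC := fun z _ c _ => by
    rw [hSbar, Function.update_self, hAL, hQL, hBL]
  have hSj : ∀ j : Fin d, (j : ℕ) < d - 1 → HasLaurentSlice j Sbar (Bj j) (Qj j) (Bj j) :=
    fun j hj => hasLaurentSlice_of_eq_add_inv_mul_add (hBjind j hj) (hQjind j hj) (hBjQj j hj)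
  have hAj : ∀ j : Fin d, (j : ℕ) < d - 1 → HasLaurentSlice j AC (A' j) (A'' j) (A' j) :=
    fun j hj => hasLaurentSlice_of_eq_add_inv_mul_add (fun z c => (hA'ind j hj z c).1)
      (fun z c => (hA''ind j hj z c).1) (hAdec j hj)
  have hBj : ∀ j : Fin d, (j : ℕ) < d - 1 → HasLaurentSlice j BC (B' j) (B'' j) (B' j) :=
    fun j hj => hasLaurentSlice_of_eq_add_inv_mul_add (fun z c => (hB'ind j hj z c).1)
      (fun z c => (hB''ind j hj z c).1) (hBdec j hj)
  have hbal := mul_eq_inv_mul_of_sq_eq_div hpd0 hpd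
  rw [hSt']
  refine ⟨fun j => ?_, fun j k hjk => ?_, ?_, fun j hj => ?_, fun j hj => ?_⟩
  · rcases hlt_or_eq j with hj | rfl
    · exact pderiv'_comp_torusPoint_zero_eq_zero (hp j) (hSj j hj p hp) (by rw [hpinv j hj])
    · exact pderiv'_comp_torusPoint_zero_eq_zero (hp L) (hSL p hp) hbal
  · rcases hlt_or_eq k with hk | rfl
    · exact pderiv'_pderiv'_comp_torusPoint_zero_eq_zero_of_inv_eq_self hp hjk (hpinv k hk)
        (hSj k hk)
    · have hj := (hlt_or_eq j).resolve_right hjk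
      exact pderiv'_pderiv'_comp_torusPoint_zero_eq_zero_of_hasLaurentSlice hp hjk (hpinv j hj)
        hSL (hAj j hj) (hBj j hj)
  · rw [pderiv'_pderiv'_comp_torusPoint hp hSL hAL hBL]
    simp only [torusPoint_zero]
    rw [hbal]
    ring
  · rw [pderiv'_pderiv'_comp_torusPoint hp (hSj j hj) (hBjind j hj) (hBjind j hj)]
    simp only [torusPoint_zero, hpinv j hj]
    ring
  · have hjL : j ≠ L := fun h => by simp [h, hL] at hj
    exact pderiv'_pderiv'_pderiv'_comp_torusPoint_zero hp hjL (hpinv j hj) hSbar (hSj j hj)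
      (hBjind j hj) (hAj j hj) (hBj j hj) (fun z c => (hA'ind j hj z c).2)
      (fun z c => (hB'ind j hj z c).2) hQL
end

section
/- Let U ⊆ ℝ^d be open with 0 ∈ U and let u, g : U → ℂ be infinitely differentiable with g(0) = 0, ∇g(0) = 0, and the Hessian matrix g''(0) invertible. Define g̲(θ) = g(θ) − (1/2)·θᵀ g''(0) θ, the differential operator ℋ = −Σ_{a,b=1}^d (g''(0)^{−1})_{a,b} ∂_a ∂_b, and L₁(u,g) = Σ_{l=0}^{2} ℋ^{1+l}(u·g̲^{ l})(0) / ( (−1)·2^{1+l}·l!·(1+l)! ). Then: (i) L₁(u,g) = −(1/2)·( ℋ(u)(0) + ℋ²(u·g̲)(0)/4 + u(0)·ℋ³(g̲²)(0)/48 ); (ii) if u(0) = 0 then L₁(u,g) = −(1/2)·( ℋ(u)(0) + ℋ²(u·g̲)(0)/4 ), and only terms involving third partial derivatives of g contribute to the ℋ² term; (iii) if u(0) = 0 and ∇u(0) = 0 then L₁(u,g) = −(1/2)·ℋ(u)(0); (iv) if in addition all second partial derivatives of u vanish at 0 then L₁(u,g) = 0. -/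
open Finset

namespace L1Aux

variable {d : ℕ} {U : Set (Fin d → ℝ)}

def sv (k : Fin d) : Fin d → ℝ := Pi.single k 1


lemma update_eq_line (z : Fin d → ℝ) (k : Fin d) (s : ℝ) :
    Function.update z k s = z + (s - z k) • sv k := by
  funext a
  by_cases h : a = k
  · subst h; simp [sv]
  · simp [Function.update_apply, h, sv, Pi.single_apply]

lemma hasDerivAt_line (z : Fin d → ℝ) (k : Fin d) (t : ℝ) :
    HasDerivAt (fun s : ℝ => Function.update z k s) (sv k) t := by
  have : (fun s : ℝ => Function.update z k s)
      = fun s : ℝ => z + (s - z k) • sv k := by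
    funext s; exact update_eq_line z k s
  rw [this]
  have h := (((hasDerivAt_id t).sub_const (z k)).smul_const (sv k)).const_add z
  simpa using h

lemma sliceHasDerivAt (hU : IsOpen U) {f : (Fin d → ℝ) → ℂ}
    (hf : ContDiffOn ℝ (⊤ : ℕ∞) f U) {z : Fin d → ℝ} (hz : z ∈ U) (k : Fin d) :
    HasDerivAt (fun s : ℝ => f (Function.update z k s))
      (fderiv ℝ f z (sv k)) (z k) := by
  have hd : DifferentiableAt ℝ f z :=
    (hf.contDiffAt (hU.mem_nhds hz)).differentiableAt (by simp)
  have hz' : Function.update z k (z k) = z := Function.update_eq_self k z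
  have hF : HasFDerivAt f (fderiv ℝ f z) (Function.update z k (z k)) := by
    rw [hz']; exact hd.hasFDerivAt
  exact hF.comp_hasDerivAt (z k) (hasDerivAt_line z k (z k))

lemma pderiv'_eq (hU : IsOpen U) {f : (Fin d → ℝ) → ℂ}
    (hf : ContDiffOn ℝ (⊤ : ℕ∞) f U) {z : Fin d → ℝ} (hz : z ∈ U) (k : Fin d) :
    pderiv' d k f z = fderiv ℝ f z (sv k) :=
  (sliceHasDerivAt hU hf hz k).deriv

lemma sliceDiff (hU : IsOpen U) {f : (Fin d → ℝ) → ℂ}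
    (hf : ContDiffOn ℝ (⊤ : ℕ∞) f U) {z : Fin d → ℝ} (hz : z ∈ U) (k : Fin d) :
    DifferentiableAt ℝ (fun s : ℝ => f (Function.update z k s)) (z k) :=
  (sliceHasDerivAt hU hf hz k).differentiableAt

lemma eventually_update_mem (hU : IsOpen U) {z : Fin d → ℝ} (hz : z ∈ U) (k : Fin d) :
    ∀ᶠ s in nhds (z k), Function.update z k s ∈ U := by
  have hc : Continuous (fun s : ℝ => Function.update z k s) := by
    have : (fun s : ℝ => Function.update z k s)
        = fun s : ℝ => z + (s - z k) • sv k := by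
      funext s; exact update_eq_line z k s
    rw [this]
    exact continuous_const.add ((continuous_id.sub continuous_const).smul continuous_const)
  have : Function.update z k (z k) ∈ U := by rwa [Function.update_eq_self]
  exact hc.continuousAt.eventually_mem (hU.mem_nhds this)

lemma pderiv'_congr (hU : IsOpen U) {f g : (Fin d → ℝ) → ℂ}
    (h : Set.EqOn f g U) {z : Fin d → ℝ} (hz : z ∈ U) (k : Fin d) :
    pderiv' d k f z = pderiv' d k g z := by
  apply Filter.EventuallyEq.deriv_eq
  filter_upwards [eventually_update_mem hU hz k] with s hs using h hs

lemma pderiv'_contDiffOn (hU : IsOpen U) {f : (Fin d → ℝ) → ℂ}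
    (hf : ContDiffOn ℝ (⊤ : ℕ∞) f U) (k : Fin d) :
    ContDiffOn ℝ (⊤ : ℕ∞) (pderiv' d k f) U := by
  have h1 : ContDiffOn ℝ (⊤ : ℕ∞) (fderiv ℝ f) U := hf.fderiv_of_isOpen hU (by simp)
  exact (h1.clm_apply contDiffOn_const).congr fun z hz => pderiv'_eq hU hf hz k

lemma pderiv'_add (hU : IsOpen U) {f g : (Fin d → ℝ) → ℂ}
    (hf : ContDiffOn ℝ (⊤ : ℕ∞) f U) (hg : ContDiffOn ℝ (⊤ : ℕ∞) g U) {z : Fin d → ℝ}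
    (hz : z ∈ U) (k : Fin d) :
    pderiv' d k (fun w => f w + g w) z = pderiv' d k f z + pderiv' d k g z := by
  unfold pderiv'
  exact deriv_add (sliceDiff hU hf hz k) (sliceDiff hU hg hz k)

lemma pderiv'_mul (hU : IsOpen U) {f g : (Fin d → ℝ) → ℂ}
    (hf : ContDiffOn ℝ (⊤ : ℕ∞) f U) (hg : ContDiffOn ℝ (⊤ : ℕ∞) g U) {z : Fin d → ℝ}
    (hz : z ∈ U) (k : Fin d) :
    pderiv' d k (fun w => f w * g w) z
      = pderiv' d k f z * g z + f z * pderiv' d k g z := by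
  unfold pderiv'
  have := deriv_fun_mul (sliceDiff hU hf hz k) (sliceDiff hU hg hz k)
  simpa [Function.update_eq_self] using this

lemma pderiv'_const_mul (hU : IsOpen U) (c : ℂ) {f : (Fin d → ℝ) → ℂ}
    (hf : ContDiffOn ℝ (⊤ : ℕ∞) f U) {z : Fin d → ℝ} (hz : z ∈ U) (k : Fin d) :
    pderiv' d k (fun w => c * f w) z = c * pderiv' d k f z := by
  unfold pderiv'
  exact deriv_const_mul c (sliceDiff hU hf hz k)

lemma pderiv'_neg {f : (Fin d → ℝ) → ℂ} (z : Fin d → ℝ) (k : Fin d) :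
    pderiv' d k (fun w => -f w) z = -pderiv' d k f z := by
  unfold pderiv'; exact deriv.neg

lemma pderiv'_const (c : ℂ) (z : Fin d → ℝ) (k : Fin d) :
    pderiv' d k (fun _ => c) z = 0 := by
  unfold pderiv'; exact deriv_const _ c

lemma contDiffOn_listSum {ι : Type*} (l : List ι)
    (F : ι → (Fin d → ℝ) → ℂ) (hF : ∀ i ∈ l, ContDiffOn ℝ (⊤ : ℕ∞) (F i) U) :
    ContDiffOn ℝ (⊤ : ℕ∞) (fun w => (l.map (fun i => F i w)).sum) U := by
  induction l with
  | nil => simpa using contDiffOn_const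
  | cons j l ih =>
    simp only [List.map_cons, List.sum_cons]
    exact (hF j (by simp)).add (ih (fun i hi => hF i (List.mem_cons_of_mem _ hi)))

lemma pderiv'_listSum (hU : IsOpen U) {ι : Type*} (l : List ι)
    (F : ι → (Fin d → ℝ) → ℂ) (hF : ∀ i ∈ l, ContDiffOn ℝ (⊤ : ℕ∞) (F i) U)
    {z : Fin d → ℝ} (hz : z ∈ U) (k : Fin d) :
    pderiv' d k (fun w => (l.map (fun i => F i w)).sum) z
      = (l.map (fun i => pderiv' d k (F i) z)).sum := by
  induction l with
  | nil => simpa using pderiv'_const 0 z k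
  | cons i l ih =>
    simp only [List.map_cons, List.sum_cons]
    rw [show (fun w => F i w + (l.map (fun j => F j w)).sum)
        = fun w => F i w + (fun w => (l.map (fun j => F j w)).sum) w from rfl] at *
    rw [pderiv'_add hU (hF i (by simp))
      (contDiffOn_listSum l F (fun j hj => hF j (List.mem_cons_of_mem _ hj))) hz k,
      ih (fun j hj => hF j (List.mem_cons_of_mem _ hj))]

lemma pderiv'_sum (hU : IsOpen U) {ι : Type*} (s : Finset ι)
    (F : ι → (Fin d → ℝ) → ℂ) (hF : ∀ i ∈ s, ContDiffOn ℝ (⊤ : ℕ∞) (F i) U)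
    {z : Fin d → ℝ} (hz : z ∈ U) (k : Fin d) :
    pderiv' d k (fun w => ∑ i ∈ s, F i w) z = ∑ i ∈ s, pderiv' d k (F i) z := by
  unfold pderiv'
  rw [show (fun s_1 => (fun w => ∑ i ∈ s, F i w) (Function.update z k s_1))
      = fun s_1 => ∑ i ∈ s, F i (Function.update z k s_1) from rfl]
  rw [deriv_fun_sum fun i hi => sliceDiff hU (hF i hi) hz k]

/-- iterated partial derivative along a list of coordinates (head = outermost). -/
noncomputable def DL (d : ℕ) : List (Fin d) → ((Fin d → ℝ) → ℂ) → ((Fin d → ℝ) → ℂ)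
  | [], f => f
  | a :: L, f => pderiv' d a (DL d L f)

@[simp] lemma DL_nil (f : (Fin d → ℝ) → ℂ) : DL d [] f = f := rfl
@[simp] lemma DL_cons (a : Fin d) (L : List (Fin d)) (f : (Fin d → ℝ) → ℂ) :
    DL d (a :: L) f = pderiv' d a (DL d L f) := rfl

lemma DL_contDiffOn (hU : IsOpen U) (L : List (Fin d)) {f : (Fin d → ℝ) → ℂ}
    (hf : ContDiffOn ℝ (⊤ : ℕ∞) f U) : ContDiffOn ℝ (⊤ : ℕ∞) (DL d L f) U := by
  induction L with
  | nil => exact hf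
  | cons a L ih => exact pderiv'_contDiffOn hU ih a

lemma DL_congr (hU : IsOpen U) (L : List (Fin d)) {f g : (Fin d → ℝ) → ℂ}
    (h : Set.EqOn f g U) : Set.EqOn (DL d L f) (DL d L g) U := by
  induction L with
  | nil => exact h
  | cons a L ih => exact fun z hz => pderiv'_congr hU ih hz a

lemma DL_append (L₁ L₂ : List (Fin d)) (f : (Fin d → ℝ) → ℂ) :
    DL d (L₁ ++ L₂) f = DL d L₁ (DL d L₂ f) := by
  induction L₁ with
  | nil => rfl
  | cons a L ih => simp [ih]

lemma DL_add (hU : IsOpen U) (L : List (Fin d)) {f g : (Fin d → ℝ) → ℂ}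
    (hf : ContDiffOn ℝ (⊤ : ℕ∞) f U) (hg : ContDiffOn ℝ (⊤ : ℕ∞) g U) :
    Set.EqOn (DL d L (fun w => f w + g w)) (fun z => DL d L f z + DL d L g z) U := by
  induction L with
  | nil => exact fun z _ => rfl
  | cons a L ih =>
    intro z hz
    have h1 := pderiv'_congr hU ih hz a
    rw [DL_cons, h1,
      pderiv'_add hU (DL_contDiffOn hU L hf) (DL_contDiffOn hU L hg) hz a]
    rfl

lemma DL_const_mul (hU : IsOpen U) (L : List (Fin d)) (c : ℂ) {f : (Fin d → ℝ) → ℂ}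
    (hf : ContDiffOn ℝ (⊤ : ℕ∞) f U) :
    Set.EqOn (DL d L (fun w => c * f w)) (fun z => c * DL d L f z) U := by
  induction L with
  | nil => exact fun z _ => rfl
  | cons a L ih =>
    intro z hz
    rw [DL_cons, pderiv'_congr hU ih hz a,
      pderiv'_const_mul hU c (DL_contDiffOn hU L hf) hz a]
    rfl

lemma DL_neg (hU : IsOpen U) (L : List (Fin d)) {f : (Fin d → ℝ) → ℂ}
    (hf : ContDiffOn ℝ (⊤ : ℕ∞) f U) :
    Set.EqOn (DL d L (fun w => -f w)) (fun z => -DL d L f z) U := by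
  intro z hz
  have h : Set.EqOn (fun w => -f w) (fun w => (-1 : ℂ) * f w) U := by
    intro w _; ring
  rw [DL_congr hU L h hz, DL_const_mul hU L (-1) hf hz]; ring

lemma DL_sum (hU : IsOpen U) (L : List (Fin d)) {ι : Type*} (s : Finset ι)
    (F : ι → (Fin d → ℝ) → ℂ) (hF : ∀ i ∈ s, ContDiffOn ℝ (⊤ : ℕ∞) (F i) U) :
    Set.EqOn (DL d L (fun w => ∑ i ∈ s, F i w)) (fun z => ∑ i ∈ s, DL d L (F i) z) U := by
  induction L with
  | nil => exact fun z _ => rfl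
  | cons a L ih =>
    intro z hz
    rw [DL_cons, pderiv'_congr hU ih hz a,
      pderiv'_sum hU s _ (fun i hi => DL_contDiffOn hU L (hF i hi)) hz a]
    rfl

/-- all ways to split a list of derivatives between the two factors -/
def splits : List (Fin d) → List (List (Fin d) × List (Fin d))
  | [] => [([], [])]
  | a :: L => (splits L).flatMap fun pq => [(a :: pq.1, pq.2), (pq.1, a :: pq.2)]

lemma splits_length : ∀ (L : List (Fin d)), ∀ pq ∈ splits L,
    pq.1.length + pq.2.length = L.length := by
  intro L
  induction L with
  | nil => intro pq h; simp [splits] at h; simp [h]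
  | cons a L ih =>
    intro pq h
    simp only [splits, List.mem_flatMap] at h
    obtain ⟨x, hx, hpq⟩ := h
    have := ih x hx
    simp at hpq
    rcases hpq with h1 | h1 <;> subst h1 <;> simp <;> omega

lemma sum_map_pair {ι κ : Type*} (G : κ → ℂ) (h₁ h₂ : ι → κ) (l : List ι) :
    (((l.flatMap fun x => [h₁ x, h₂ x]).map G)).sum
      = (l.map fun x => G (h₁ x) + G (h₂ x)).sum := by
  induction l with
  | nil => simp
  | cons i l ih => simp [ih]; ring

lemma DL_mul (hU : IsOpen U) (L : List (Fin d)) {f g : (Fin d → ℝ) → ℂ}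
    (hf : ContDiffOn ℝ (⊤ : ℕ∞) f U) (hg : ContDiffOn ℝ (⊤ : ℕ∞) g U) :
    Set.EqOn (DL d L (fun w => f w * g w))
      (fun z => ((splits L).map (fun pq => DL d pq.1 f z * DL d pq.2 g z)).sum) U := by
  induction L with
  | nil => intro z _; simp [splits]
  | cons a L ih =>
    intro z hz
    beta_reduce
    rw [DL_cons, pderiv'_congr hU ih hz a]
    rw [pderiv'_listSum hU (splits L)
      (fun pq => fun w => DL d pq.1 f w * DL d pq.2 g w)
      (fun pq _ => (DL_contDiffOn hU pq.1 hf).mul (DL_contDiffOn hU pq.2 hg)) hz a]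
    rw [show splits (a :: L) = (splits L).flatMap
        (fun pq => [(a :: pq.1, pq.2), (pq.1, a :: pq.2)]) from rfl]
    rw [sum_map_pair (fun pq => DL d pq.1 f z * DL d pq.2 g z)
      (fun pq => (a :: pq.1, pq.2)) (fun pq => (pq.1, a :: pq.2)) (splits L)]
    congr 1
    apply List.map_congr_left
    intro pq _
    rw [pderiv'_mul hU (DL_contDiffOn hU pq.1 hf) (DL_contDiffOn hU pq.2 hg) hz a]
    rfl

/-- `f` vanishes to order `p` at `0`. -/
def Van (p : ℕ) (f : (Fin d → ℝ) → ℂ) : Prop :=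
  ∀ L : List (Fin d), L.length < p → DL d L f 0 = 0

lemma van_mul (hU : IsOpen U) (h0 : (0 : Fin d → ℝ) ∈ U) {f g : (Fin d → ℝ) → ℂ}
    (hf : ContDiffOn ℝ (⊤ : ℕ∞) f U) (hg : ContDiffOn ℝ (⊤ : ℕ∞) g U) {p q : ℕ}
    (hp : Van p f) (hq : Van q g) : Van (p + q) (fun w => f w * g w) := by
  intro L hL
  rw [DL_mul hU L hf hg h0]
  apply List.sum_eq_zero
  intro x hx
  simp only [List.mem_map] at hx
  obtain ⟨pq, hpq, rfl⟩ := hx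
  have hlen := splits_length L pq hpq
  rcases Nat.lt_or_ge pq.1.length p with h | h
  · rw [hp pq.1 h, zero_mul]
  · rw [hq pq.2 (by omega), mul_zero]

lemma hasDerivAt_updorig (z : Fin d → ℝ) (k a : Fin d) (t : ℝ) :
    HasDerivAt (fun s : ℝ => ((Function.update z k s a : ℝ) : ℂ))
      (if a = k then 1 else 0) t := by
  simp only [Function.update_apply]
  by_cases h : a = k
  · simp only [h, if_pos rfl]
    simpa using (hasDerivAt_id t).ofReal_comp
  · simp only [if_neg h]
    exact hasDerivAt_const t _

noncomputable def qf (M : Matrix (Fin d) (Fin d) ℂ) : (Fin d → ℝ) → ℂ :=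
  fun θ => (1 / 2) * ∑ a : Fin d, ∑ b : Fin d, (θ a : ℂ) * M a b * (θ b : ℂ)

lemma coord_contDiff (a : Fin d) : ContDiff ℝ (⊤ : ℕ∞) (fun θ : Fin d → ℝ => (θ a : ℂ)) :=
  Complex.ofRealCLM.contDiff.comp (contDiff_apply ℝ ℝ a)

lemma qf_contDiff (M : Matrix (Fin d) (Fin d) ℂ) : ContDiff ℝ (⊤ : ℕ∞) (qf M) := by
  unfold qf
  exact contDiff_const.mul (ContDiff.sum fun a _ => ContDiff.sum fun b _ =>
    ((coord_contDiff a).mul contDiff_const).mul (coord_contDiff b))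

noncomputable def Lq (M : Matrix (Fin d) (Fin d) ℂ) (k : Fin d) : (Fin d → ℝ) → ℂ :=
  fun z => (1 / 2) * ((∑ b : Fin d, M k b * (z b : ℂ)) + ∑ a : Fin d, (z a : ℂ) * M a k)

lemma pderiv'_qf (M : Matrix (Fin d) (Fin d) ℂ) (k : Fin d) (z : Fin d → ℝ) :
    pderiv' d k (qf M) z = Lq M k z := by
  have H : HasDerivAt (fun s : ℝ => qf M (Function.update z k s))
      ((1/2) * ∑ a : Fin d, ∑ b : Fin d, ((if a = k then (1:ℂ) else 0) * M a b * (z b : ℂ)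
        + (z a : ℂ) * M a b * (if b = k then (1:ℂ) else 0))) (z k) := by
    unfold qf
    apply HasDerivAt.const_mul
    apply HasDerivAt.fun_sum; intro a _
    apply HasDerivAt.fun_sum; intro b _
    have ha := hasDerivAt_updorig z k a (z k)
    have hb := hasDerivAt_updorig z k b (z k)
    have := (ha.mul_const (M a b)).fun_mul hb
    simpa [Function.update_eq_self] using this
  have hd : pderiv' d k (qf M) z = _ := H.deriv
  rw [hd]
  unfold Lq
  congr 1
  rw [show (∑ a : Fin d, ∑ b : Fin d, ((if a = k then (1:ℂ) else 0) * M a b * (z b : ℂ)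
        + (z a : ℂ) * M a b * (if b = k then (1:ℂ) else 0)))
      = (∑ a : Fin d, ∑ b : Fin d, (if a = k then (1:ℂ) else 0) * M a b * (z b : ℂ))
        + (∑ a : Fin d, ∑ b : Fin d, (z a : ℂ) * M a b * (if b = k then (1:ℂ) else 0)) by
    rw [← Finset.sum_add_distrib]
    exact Finset.sum_congr rfl fun a _ => Finset.sum_add_distrib]
  congr 1
  · rw [Finset.sum_comm]
    apply Finset.sum_congr rfl; intro b _
    simp [ite_mul, zero_mul, one_mul]
  · apply Finset.sum_congr rfl; intro a _
    simp [mul_ite, mul_zero, mul_one]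

lemma pderiv'_qf_fun (M : Matrix (Fin d) (Fin d) ℂ) (k : Fin d) :
    pderiv' d k (qf M) = Lq M k := funext (pderiv'_qf M k)

lemma pderiv'_Lq (M : Matrix (Fin d) (Fin d) ℂ) (x k : Fin d) (z : Fin d → ℝ) :
    pderiv' d x (Lq M k) z = (1 / 2) * (M k x + M x k) := by
  have H : HasDerivAt (fun s : ℝ => Lq M k (Function.update z x s))
      ((1/2) * ((∑ b : Fin d, M k b * (if b = x then (1:ℂ) else 0))
        + ∑ a : Fin d, (if a = x then (1:ℂ) else 0) * M a k)) (z x) := by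
    unfold Lq
    apply HasDerivAt.const_mul
    apply HasDerivAt.add
    · apply HasDerivAt.fun_sum; intro b _
      exact (hasDerivAt_updorig z x b (z x)).const_mul (M k b)
    · apply HasDerivAt.fun_sum; intro a _
      exact (hasDerivAt_updorig z x a (z x)).mul_const (M a k)
  have hd : pderiv' d x (Lq M k) z = _ := H.deriv
  rw [hd]
  congr 1
  congr 1
  · simp [mul_ite, mul_zero, mul_one]
  · simp [ite_mul, zero_mul, one_mul]

lemma pderiv'_Lq_fun (M : Matrix (Fin d) (Fin d) ℂ) (x k : Fin d) :
    pderiv' d x (Lq M k) = fun _ => (1 / 2) * (M k x + M x k) :=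
  funext (pderiv'_Lq M x k)

lemma DL2_qf (M : Matrix (Fin d) (Fin d) ℂ) (x y : Fin d) (z : Fin d → ℝ) :
    pderiv' d x (pderiv' d y (qf M)) z = (1 / 2) * (M y x + M x y) := by
  rw [pderiv'_qf_fun M y, pderiv'_Lq M x y z]

lemma DL3_qf (M : Matrix (Fin d) (Fin d) ℂ) (x y w : Fin d) (z : Fin d → ℝ) :
    pderiv' d x (pderiv' d y (pderiv' d w (qf M))) z = 0 := by
  rw [pderiv'_qf_fun M w, pderiv'_Lq_fun M y w, pderiv'_const]

lemma M_symm (hU : IsOpen U) (h0 : (0 : Fin d → ℝ) ∈ U) {g : (Fin d → ℝ) → ℂ}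
    (hg : ContDiffOn ℝ (⊤ : ℕ∞) g U) (x y : Fin d) :
    pderiv' d x (pderiv' d y g) 0 = pderiv' d y (pderiv' d x g) 0 := by
  have hfd : ContDiffOn ℝ (⊤ : ℕ∞) (fderiv ℝ g) U := hg.fderiv_of_isOpen hU (by simp)
  have hdiff2 : DifferentiableAt ℝ (fderiv ℝ g) 0 :=
    (hfd.contDiffAt (hU.mem_nhds h0)).differentiableAt (by simp)
  have hev : ∀ᶠ y in nhds (0 : Fin d → ℝ), HasFDerivAt g (fderiv ℝ g y) y := by
    filter_upwards [hU.mem_nhds h0] with w hw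
    exact ((hg.contDiffAt (hU.mem_nhds hw)).differentiableAt (by simp)).hasFDerivAt
  have hsymm := second_derivative_symmetric_of_eventually hev hdiff2.hasFDerivAt
  have key : ∀ a b : Fin d, pderiv' d a (pderiv' d b g) 0
      = fderiv ℝ (fderiv ℝ g) 0 (sv a) (sv b) := by
    intro a b
    rw [pderiv'_eq hU (pderiv'_contDiffOn hU hg b) h0 a]
    have h1 : fderiv ℝ (pderiv' d b g) 0
        = fderiv ℝ (fun z => fderiv ℝ g z (sv b)) 0 := by
      apply Filter.EventuallyEq.fderiv_eq
      filter_upwards [hU.mem_nhds h0] with z hz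
      exact pderiv'_eq hU hg hz b
    rw [h1, fderiv_clm_apply hdiff2 (differentiableAt_const (sv b))]
    simp
  rw [key x y, key y x, hsymm (sv y) (sv x)]

lemma DL_sub (hU : IsOpen U) (L : List (Fin d)) {f g : (Fin d → ℝ) → ℂ}
    (hf : ContDiffOn ℝ (⊤ : ℕ∞) f U) (hg : ContDiffOn ℝ (⊤ : ℕ∞) g U) :
    Set.EqOn (DL d L (fun w => f w - g w)) (fun z => DL d L f z - DL d L g z) U := by
  intro z hz
  have h : Set.EqOn (fun w => f w - g w) (fun w => f w + (-1 : ℂ) * g w) U := by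
    intro w _; ring
  rw [DL_congr hU L h hz, DL_add hU L hf (contDiffOn_const.mul hg) hz]
  beta_reduce
  rw [DL_const_mul hU L (-1) hg hz]
  ring

section Main

variable {g gbar u : (Fin d → ℝ) → ℂ} {M : Matrix (Fin d) (Fin d) ℂ}

lemma smooth_gbar (hg : ContDiffOn ℝ (⊤ : ℕ∞) g U)
    (hgbar : gbar = fun θ => g θ - qf M θ) : ContDiffOn ℝ (⊤ : ℕ∞) gbar U := by
  rw [hgbar]; exact hg.sub (qf_contDiff M).contDiffOn

lemma DL_gbar_lt3 (hU : IsOpen U) (h0 : (0 : Fin d → ℝ) ∈ U)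
    (hg : ContDiffOn ℝ (⊤ : ℕ∞) g U) (hg0 : g 0 = 0)
    (hgrad : ∀ a : Fin d, pderiv' d a g 0 = 0)
    (hM : ∀ a b : Fin d, M a b = pderiv' d a (pderiv' d b g) 0)
    (hgbar : gbar = fun θ => g θ - qf M θ) :
    ∀ L : List (Fin d), L.length < 3 → DL d L gbar 0 = 0 := by
  intro L hL
  rw [hgbar, DL_sub hU L hg (qf_contDiff M).contDiffOn h0]
  beta_reduce
  match L, hL with
  | [], _ => simp only [DL_nil]; rw [hg0]; simp [qf]
  | [x], _ =>
    simp only [DL_cons, DL_nil]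
    rw [hgrad x, pderiv'_qf]; simp [Lq]
  | [x, y], _ =>
    simp only [DL_cons, DL_nil]
    rw [DL2_qf, ← hM x y]
    have hs : M y x = M x y := by
      rw [hM y x, hM x y]; exact M_symm hU h0 hg y x
    rw [hs]; ring

lemma Van3_gbar (hU : IsOpen U) (h0 : (0 : Fin d → ℝ) ∈ U)
    (hg : ContDiffOn ℝ (⊤ : ℕ∞) g U) (hg0 : g 0 = 0)
    (hgrad : ∀ a : Fin d, pderiv' d a g 0 = 0)
    (hM : ∀ a b : Fin d, M a b = pderiv' d a (pderiv' d b g) 0)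
    (hgbar : gbar = fun θ => g θ - qf M θ) : Van 3 gbar :=
  fun L hL => DL_gbar_lt3 hU h0 hg hg0 hgrad hM hgbar L hL

lemma DL3_gbar (hU : IsOpen U) (h0 : (0 : Fin d → ℝ) ∈ U)
    (hg : ContDiffOn ℝ (⊤ : ℕ∞) g U)
    (hgbar : gbar = fun θ => g θ - qf M θ) (x y w : Fin d) :
    DL d [x, y, w] gbar 0 = DL d [x, y, w] g 0 := by
  rw [hgbar, DL_sub hU [x, y, w] hg (qf_contDiff M).contDiffOn h0]
  beta_reduce
  have : DL d [x, y, w] (qf M) 0 = 0 := by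
    simp only [DL_cons, DL_nil]; rw [DL3_qf]
  rw [this]; ring

lemma key6 (hU : IsOpen U) (h0 : (0 : Fin d → ℝ) ∈ U)
    (hu : ContDiffOn ℝ (⊤ : ℕ∞) u U) (hgb : ContDiffOn ℝ (⊤ : ℕ∞) gbar U)
    (hv3 : Van 3 gbar)
    (L : List (Fin d)) (hL : L.length ≤ 6) :
    DL d L (fun z => u z * gbar z ^ 2) 0 = u 0 * DL d L (fun z => gbar z ^ 2) 0 := by
  have hsq_eq : (fun z : Fin d → ℝ => gbar z ^ 2) = (fun z => gbar z * gbar z) := by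
    funext z; ring
  have hsq : ContDiffOn ℝ (⊤ : ℕ∞) (fun z : Fin d → ℝ => gbar z ^ 2) U := by
    rw [hsq_eq]; exact hgb.mul hgb
  have hvsq : Van 6 (fun z : Fin d → ℝ => gbar z ^ 2) := by
    rw [hsq_eq]
    exact van_mul hU h0 hgb hgb hv3 hv3
  have hv1 : Van 1 (fun z : Fin d → ℝ => u z - u 0) := by
    intro L' hL'
    match L', hL' with
    | [], _ => simp
  have hdecomp : (fun z : Fin d → ℝ => u z * gbar z ^ 2)
      = fun z => (fun w => (u w - u 0) * gbar w ^ 2) z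
        + (fun w => u 0 * gbar w ^ 2) z := by
    funext z; ring
  rw [hdecomp, DL_add hU L ((hu.sub contDiffOn_const).mul hsq)
    (contDiffOn_const.mul hsq) h0]
  beta_reduce
  have h1 : DL d L (fun w => (u w - u 0) * gbar w ^ 2) 0 = 0 := by
    have := van_mul hU h0 (hu.sub contDiffOn_const) hsq hv1 hvsq L (by omega)
    exact this
  rw [h1, DL_const_mul hU L (u 0) hsq h0]
  ring

section Hop

variable {N : Matrix (Fin d) (Fin d) ℂ} {Hop : ((Fin d → ℝ) → ℂ) → ((Fin d → ℝ) → ℂ)}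

lemma Hop_eq (hHop : ∀ f z, Hop f z = -∑ a : Fin d, ∑ b : Fin d,
      N a b * pderiv' d a (pderiv' d b f) z) (f : (Fin d → ℝ) → ℂ) :
    Hop f = fun z => ∑ a : Fin d, ∑ b : Fin d, (-(N a b)) * DL d [a, b] f z := by
  funext z
  rw [hHop f z]
  rw [← Finset.sum_neg_distrib]
  apply Finset.sum_congr rfl; intro a _
  rw [← Finset.sum_neg_distrib]
  apply Finset.sum_congr rfl; intro b _
  simp only [DL_cons, DL_nil, neg_mul]

lemma Hop_smooth (hU : IsOpen U)
    (hHop : ∀ f z, Hop f z = -∑ a : Fin d, ∑ b : Fin d,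
      N a b * pderiv' d a (pderiv' d b f) z)
    {f : (Fin d → ℝ) → ℂ} (hf : ContDiffOn ℝ (⊤ : ℕ∞) f U) :
    ContDiffOn ℝ (⊤ : ℕ∞) (Hop f) U := by
  rw [Hop_eq hHop f]
  apply ContDiffOn.sum; intro a _
  apply ContDiffOn.sum; intro b _
  exact contDiffOn_const.mul (DL_contDiffOn hU [a, b] hf)

lemma DL_Hop (hU : IsOpen U)
    (hHop : ∀ f z, Hop f z = -∑ a : Fin d, ∑ b : Fin d,
      N a b * pderiv' d a (pderiv' d b f) z)
    (L : List (Fin d)) {f : (Fin d → ℝ) → ℂ} (hf : ContDiffOn ℝ (⊤ : ℕ∞) f U)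
    {z : Fin d → ℝ} (hz : z ∈ U) :
    DL d L (Hop f) z = -∑ a : Fin d, ∑ b : Fin d, N a b * DL d (L ++ [a, b]) f z := by
  have h1 : Set.EqOn (Hop f)
      (fun w => ∑ a : Fin d, ∑ b : Fin d, (-(N a b)) * DL d [a, b] f w) U := by
    intro w _; rw [Hop_eq hHop f]
  rw [DL_congr hU L h1 hz]
  rw [DL_sum hU L Finset.univ
    (fun a => fun w => ∑ b : Fin d, (-(N a b)) * DL d [a, b] f w)
    (fun a _ => ContDiffOn.sum fun b _ =>
      contDiffOn_const.mul (DL_contDiffOn hU [a, b] hf)) hz]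
  beta_reduce
  rw [← Finset.sum_neg_distrib]
  apply Finset.sum_congr rfl; intro a _
  rw [DL_sum hU L Finset.univ
    (fun b => fun w => (-(N a b)) * DL d [a, b] f w)
    (fun b _ => contDiffOn_const.mul (DL_contDiffOn hU [a, b] hf)) hz]
  beta_reduce
  rw [← Finset.sum_neg_distrib]
  apply Finset.sum_congr rfl; intro b _
  rw [DL_const_mul hU L (-(N a b)) (DL_contDiffOn hU [a, b] hf) hz]
  beta_reduce
  rw [DL_append]
  ring

lemma Hop1_at0 (h0 : (0 : Fin d → ℝ) ∈ U)
    (hHop : ∀ f z, Hop f z = -∑ a : Fin d, ∑ b : Fin d,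
      N a b * pderiv' d a (pderiv' d b f) z)
    (f : (Fin d → ℝ) → ℂ) :
    Hop f 0 = -∑ a : Fin d, ∑ b : Fin d, N a b * DL d [a, b] f 0 := by
  rw [hHop f 0]; rfl

lemma Hop2_at0 (hU : IsOpen U) (h0 : (0 : Fin d → ℝ) ∈ U)
    (hHop : ∀ f z, Hop f z = -∑ a : Fin d, ∑ b : Fin d,
      N a b * pderiv' d a (pderiv' d b f) z)
    {f : (Fin d → ℝ) → ℂ} (hf : ContDiffOn ℝ (⊤ : ℕ∞) f U) :
    Hop (Hop f) 0 = ∑ a : Fin d, ∑ b : Fin d, ∑ c : Fin d, ∑ e : Fin d,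
      N a b * (N c e * DL d [a, b, c, e] f 0) := by
  rw [Hop1_at0 h0 hHop (Hop f)]
  rw [show (∑ a : Fin d, ∑ b : Fin d, N a b * DL d [a, b] (Hop f) 0)
      = ∑ a : Fin d, ∑ b : Fin d, N a b *
        (-∑ c : Fin d, ∑ e : Fin d, N c e * DL d ([a, b] ++ [c, e]) f 0) from
    Finset.sum_congr rfl fun a _ => Finset.sum_congr rfl fun b _ => by
      rw [DL_Hop hU hHop [a, b] hf h0]]
  simp only [List.cons_append, List.nil_append, mul_neg, Finset.sum_neg_distrib, neg_neg,
    Finset.mul_sum]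

lemma Hop3_at0 (hU : IsOpen U) (h0 : (0 : Fin d → ℝ) ∈ U)
    (hHop : ∀ f z, Hop f z = -∑ a : Fin d, ∑ b : Fin d,
      N a b * pderiv' d a (pderiv' d b f) z)
    {f : (Fin d → ℝ) → ℂ} (hf : ContDiffOn ℝ (⊤ : ℕ∞) f U) :
    Hop (Hop (Hop f)) 0 = -∑ a : Fin d, ∑ b : Fin d, ∑ c : Fin d, ∑ e : Fin d,
      ∑ p : Fin d, ∑ q : Fin d,
      N a b * (N c e * (N p q * DL d [a, b, c, e, p, q] f 0)) := by
  rw [Hop1_at0 h0 hHop (Hop (Hop f))]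
  rw [show (∑ a : Fin d, ∑ b : Fin d, N a b * DL d [a, b] (Hop (Hop f)) 0)
      = ∑ a : Fin d, ∑ b : Fin d, N a b *
        (-∑ c : Fin d, ∑ e : Fin d, N c e *
          (-∑ p : Fin d, ∑ q : Fin d, N p q * DL d [a, b, c, e, p, q] f 0)) from
    Finset.sum_congr rfl fun a _ => Finset.sum_congr rfl fun b _ => by
      rw [DL_Hop hU hHop [a, b] (Hop_smooth hU hHop hf) h0]
      rw [show (∑ c : Fin d, ∑ e : Fin d, N c e * DL d ([a, b] ++ [c, e]) (Hop f) 0)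
          = ∑ c : Fin d, ∑ e : Fin d, N c e *
            (-∑ p : Fin d, ∑ q : Fin d, N p q * DL d [a, b, c, e, p, q] f 0) from
        Finset.sum_congr rfl fun c _ => Finset.sum_congr rfl fun e _ => by
          rw [DL_Hop hU hHop ([a, b] ++ [c, e]) hf h0]; rfl]]
  simp only [mul_neg, Finset.sum_neg_distrib, neg_neg, Finset.mul_sum]

lemma D4_mul (hU : IsOpen U) (h0 : (0 : Fin d → ℝ) ∈ U)
    {u gbar g : (Fin d → ℝ) → ℂ}
    (hu : ContDiffOn ℝ (⊤ : ℕ∞) u U) (hgb : ContDiffOn ℝ (⊤ : ℕ∞) gbar U)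
    (hu0 : u 0 = 0)
    (hb0 : gbar 0 = 0)
    (hb1 : ∀ x : Fin d, DL d [x] gbar 0 = 0)
    (hb2 : ∀ x y : Fin d, DL d [x, y] gbar 0 = 0)
    (hb3 : ∀ x y w : Fin d, DL d [x, y, w] gbar 0 = DL d [x, y, w] g 0)
    (a b c e : Fin d) :
    DL d [a, b, c, e] (fun z => u z * gbar z) 0
      = DL d [a] u 0 * DL d [b, c, e] g 0 + DL d [b] u 0 * DL d [a, c, e] g 0
        + DL d [c] u 0 * DL d [a, b, e] g 0 + DL d [e] u 0 * DL d [a, b, c] g 0 := by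
  rw [DL_mul hU [a, b, c, e] hu hgb h0]
  beta_reduce
  simp only [splits, List.flatMap_cons, List.flatMap_nil, List.flatMap_append,
    List.append_nil, List.cons_append, List.nil_append, List.map_cons, List.map_append,
    List.map_nil, List.sum_cons, List.sum_append, List.sum_nil]
  rw [hb3 b c e, hb3 a c e, hb3 a b e, hb3 a b c]
  simp only [DL_nil, hu0, hb0, hb1, hb2, zero_mul, mul_zero, add_zero, zero_add]
  ring

end Hop

end Main

end L1Aux

open L1Aux in
theorem L1_simplification
    (d : ℕ) (U : Set (Fin d → ℝ)) (hU : IsOpen U) (h0 : (0 : Fin d → ℝ) ∈ U)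
    (u g : (Fin d → ℝ) → ℂ)
    (hu : ContDiffOn ℝ (⊤ : ℕ∞) u U) (hg : ContDiffOn ℝ (⊤ : ℕ∞) g U)
    (hg0 : g 0 = 0)
    (hgrad : ∀ a : Fin d, pderiv' d a g 0 = 0)
    -- the Hessian matrix of g at 0, assumed invertible
    (M : Matrix (Fin d) (Fin d) ℂ)
    (hM : ∀ a b : Fin d, M a b = pderiv' d a (pderiv' d b g) 0)
    (hMunit : IsUnit M)
    -- g̲(θ) = g(θ) - (1/2) θᵀ g''(0) θ
    (gbar : (Fin d → ℝ) → ℂ)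
    (hgbar : ∀ θ, gbar θ = g θ -
      (1 / 2) * ∑ a : Fin d, ∑ b : Fin d, (θ a : ℂ) * M a b * (θ b : ℂ))
    -- the differential operator ℋ
    (Hop : ((Fin d → ℝ) → ℂ) → ((Fin d → ℝ) → ℂ))
    (hHop : ∀ f z, Hop f z = -∑ a : Fin d, ∑ b : Fin d,
      M⁻¹ a b * pderiv' d a (pderiv' d b f) z)
    (L1 : ℂ)
    (hL1 : L1 = ∑ l ∈ Finset.range 3,
      (Hop^[1 + l] (fun θ => u θ * gbar θ ^ l)) 0 /
        ((-1) * 2 ^ (1 + l) * (Nat.factorial l : ℂ) * (Nat.factorial (1 + l) : ℂ))) :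
    -- (i)
    (L1 = -(1 / 2) * ((Hop u) 0 + (Hop^[2] (fun θ => u θ * gbar θ)) 0 / 4
        + u 0 * (Hop^[3] (fun θ => gbar θ ^ 2)) 0 / 48)) ∧
    -- (ii)
    (u 0 = 0 →
      L1 = -(1 / 2) * ((Hop u) 0 + (Hop^[2] (fun θ => u θ * gbar θ)) 0 / 4) ∧
      (Hop^[2] (fun θ => u θ * gbar θ)) 0 =
        ∑ a : Fin d, ∑ b : Fin d, ∑ c : Fin d, ∑ e : Fin d,
          M⁻¹ a b * M⁻¹ c e *
            (pderiv' d a u 0 * pderiv' d b (pderiv' d c (pderiv' d e g)) 0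
              + pderiv' d b u 0 * pderiv' d a (pderiv' d c (pderiv' d e g)) 0
              + pderiv' d c u 0 * pderiv' d a (pderiv' d b (pderiv' d e g)) 0
              + pderiv' d e u 0 * pderiv' d a (pderiv' d b (pderiv' d c g)) 0)) ∧
    -- (iii)
    (u 0 = 0 → (∀ a : Fin d, pderiv' d a u 0 = 0) →
      L1 = -(1 / 2) * (Hop u) 0) ∧
    -- (iv)
    (u 0 = 0 → (∀ a : Fin d, pderiv' d a u 0 = 0) →
      (∀ a b : Fin d, pderiv' d a (pderiv' d b u) 0 = 0) →
      L1 = 0) := by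
  have hgbar' : gbar = fun θ => g θ - qf M θ := by
    funext θ; rw [hgbar θ]; rfl
  have hgb : ContDiffOn ℝ (⊤ : ℕ∞) gbar U := smooth_gbar hg hgbar'
  have hlt3 := DL_gbar_lt3 hU h0 hg hg0 hgrad hM hgbar'
  have hb0 : gbar 0 = 0 := hlt3 [] (by simp)
  have hb1 : ∀ x, DL d [x] gbar 0 = 0 := fun x => hlt3 [x] (by simp)
  have hb2 : ∀ x y, DL d [x, y] gbar 0 = 0 := fun x y => hlt3 [x, y] (by simp)
  have hb3 := DL3_gbar hU h0 hg hgbar'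
  have hv3 : Van 3 gbar := hlt3
  have hug : ContDiffOn ℝ (⊤ : ℕ∞) (fun θ => u θ * gbar θ) U := hu.mul hgb
  have hg2 : ContDiffOn ℝ (⊤ : ℕ∞) (fun θ => gbar θ ^ 2) U := hgb.pow 2
  have hug2 : ContDiffOn ℝ (⊤ : ℕ∞) (fun θ => u θ * gbar θ ^ 2) U := hu.mul hg2
  have hit2 : ∀ F : (Fin d → ℝ) → ℂ, Hop^[2] F = Hop (Hop F) := fun F => rfl
  have hit3 : ∀ F : (Fin d → ℝ) → ℂ, Hop^[3] F = Hop (Hop (Hop F)) := fun F => rfl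
  -- key identity for the third term
  have hkey : Hop (Hop (Hop (fun θ => u θ * gbar θ ^ 2))) 0
      = u 0 * Hop (Hop (Hop (fun θ => gbar θ ^ 2))) 0 := by
    rw [Hop3_at0 hU h0 hHop hug2, Hop3_at0 hU h0 hHop hg2]
    rw [show (∑ a : Fin d, ∑ b : Fin d, ∑ c : Fin d, ∑ e : Fin d,
        ∑ p : Fin d, ∑ q : Fin d, M⁻¹ a b * (M⁻¹ c e * (M⁻¹ p q *
          DL d [a, b, c, e, p, q] (fun z => u z * gbar z ^ 2) 0)))
        = ∑ a : Fin d, ∑ b : Fin d, ∑ c : Fin d, ∑ e : Fin d,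
        ∑ p : Fin d, ∑ q : Fin d, u 0 * (M⁻¹ a b * (M⁻¹ c e * (M⁻¹ p q *
          DL d [a, b, c, e, p, q] (fun z => gbar z ^ 2) 0))) from
      Finset.sum_congr rfl fun a _ => Finset.sum_congr rfl fun b _ =>
      Finset.sum_congr rfl fun c _ => Finset.sum_congr rfl fun e _ =>
      Finset.sum_congr rfl fun p _ => Finset.sum_congr rfl fun q _ => by
        rw [key6 hU h0 hu hgb hv3 [a, b, c, e, p, q] (by simp)]; ring]
    simp only [mul_neg, Finset.mul_sum]
  -- L1 expanded
  have hL1' : L1 = Hop u 0 / (-2) + Hop (Hop (fun θ => u θ * gbar θ)) 0 / (-8)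
      + u 0 * Hop (Hop (Hop (fun θ => gbar θ ^ 2))) 0 / (-96) := by
    rw [hL1, Finset.sum_range_succ, Finset.sum_range_succ, Finset.sum_range_one]
    have t0 : (fun θ => u θ * gbar θ ^ 0) = u := by funext θ; simp
    have t1 : (fun θ => u θ * gbar θ ^ 1) = fun θ => u θ * gbar θ := by
      funext θ; rw [pow_one]
    rw [t0, t1]
    norm_num [Nat.factorial, hit2, hit3, hkey]
  have hHop2u : ∀ hu0 : u 0 = 0, Hop (Hop (fun θ => u θ * gbar θ)) 0 =
      ∑ a : Fin d, ∑ b : Fin d, ∑ c : Fin d, ∑ e : Fin d,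
        M⁻¹ a b * M⁻¹ c e *
          (pderiv' d a u 0 * pderiv' d b (pderiv' d c (pderiv' d e g)) 0
            + pderiv' d b u 0 * pderiv' d a (pderiv' d c (pderiv' d e g)) 0
            + pderiv' d c u 0 * pderiv' d a (pderiv' d b (pderiv' d e g)) 0
            + pderiv' d e u 0 * pderiv' d a (pderiv' d b (pderiv' d c g)) 0) := by
    intro hu0
    rw [Hop2_at0 hU h0 hHop hug]
    refine Finset.sum_congr rfl fun a _ => Finset.sum_congr rfl fun b _ =>
      Finset.sum_congr rfl fun c _ => Finset.sum_congr rfl fun e _ => ?_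
    rw [D4_mul hU h0 hu hgb hu0 hb0 hb1 hb2 hb3 a b c e]
    simp only [DL_cons, DL_nil]
    ring
  refine ⟨?_, fun hu0 => ⟨?_, hHop2u hu0⟩, ?_, ?_⟩
  · rw [hL1', hit2, hit3]; ring
  · rw [hL1', hit2, hu0]; ring
  · intro hu0 hgradu
    have h2 : Hop (Hop (fun θ => u θ * gbar θ)) 0 = 0 := by
      rw [hHop2u hu0]
      simp [hgradu]
    rw [hL1', hu0, h2]; ring
  · intro hu0 hgradu hhess
    have h2 : Hop (Hop (fun θ => u θ * gbar θ)) 0 = 0 := by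
      rw [hHop2u hu0]
      simp [hgradu]
    have h1 : Hop u 0 = 0 := by
      rw [hHop u 0]
      simp [hhess]
    rw [hL1', hu0, h2, h1]; ring
end
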